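/- arXiv:1202.2820 — 4 statements merged into one kernel-verified Lean document; each statement's English description precedes it below -/
import Mathlib

section
/- Let n ≥ 1 and let s : Fin (2n) → Bool be a string that is not paired-constant, i.e., s(2j) ≠ s(2j+1) for at least one j < n. Then the number of strings f ∈ P_n with Hamming distance d(s, f) ≥ n + 1 is at least 2^(n−2); equivalently, a uniformly random f ∈ P_n satisfies d(s, f) ≥ n + 1 with probability at least 1/4. -/
/-- Position `2j` within a string of length `2n`. -/
def pairFst {n : ℕ} (j : Fin n) : Fin (2*n) := ⟨2*j.val, by omega⟩

/-- Position `2j+1` within a string of length `2n`. -/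
def pairSnd {n : ℕ} (j : Fin n) : Fin (2*n) := ⟨2*j.val+1, by omega⟩


lemma count_majority {n : ℕ} (A : Finset (Fin n)) (hA : A.Nonempty) (t : Fin n → Bool) :
    2^(n-2) ≤ (Finset.univ.filter (fun g : Fin n → Bool =>
      A.card < 2 * (A.filter (fun j => g j ≠ t j)).card)).card := by
  classical
  set k := A.card with hk
  set m : (Fin n → Bool) → ℕ := fun g => (A.filter (fun j => g j ≠ t j)).card with hm
  have hmk : ∀ g, m g ≤ k := fun g => Finset.card_le_card (Finset.filter_subset _ _)
  set flip : (Fin n → Bool) → (Fin n → Bool) := fun g j => if j ∈ A then !g j else g j with hflip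
  have hflipm : ∀ g, m (flip g) = k - m g := by
    intro g
    have hset : A.filter (fun j => flip g j ≠ t j) = A \ A.filter (fun j => g j ≠ t j) := by
      ext j
      simp only [Finset.mem_filter, Finset.mem_sdiff, hflip]
      constructor
      · rintro ⟨hj, h2⟩
        rw [if_pos hj] at h2
        refine ⟨hj, fun h => ?_⟩
        revert h2
        rcases h with ⟨-, h3⟩
        cases hgj : g j <;> cases htj : t j <;> simp_all
      · rintro ⟨hj, h2⟩
        rw [if_pos hj]
        refine ⟨hj, ?_⟩
        simp only [hj, true_and] at h2
        cases hgj : g j <;> cases htj : t j <;> simp_all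
    simp only [hm, hset]
    rw [Finset.card_sdiff_of_subset (Finset.filter_subset _ _)]
  have hflipflip : ∀ g, flip (flip g) = g := by
    intro g; funext j
    by_cases hj : j ∈ A <;> simp [hflip, hj]
  set U : Finset (Fin n → Bool) := Finset.univ with hU
  set Ggt := U.filter (fun g => k < 2 * m g) with hGgt
  set Glt := U.filter (fun g => 2 * m g < k) with hGlt
  set Geq := U.filter (fun g => 2 * m g = k) with hGeq
  have hcard_eq : Ggt.card = Glt.card := by
    apply Finset.card_bij' (fun g _ => flip g) (fun g _ => flip g)
    · intro g hg
      simp only [hGgt, Finset.mem_filter] at hg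
      simp only [hGlt, Finset.mem_filter, hflipm]
      have := hmk g
      exact ⟨Finset.mem_univ _, by omega⟩
    · intro g hg
      simp only [hGlt, Finset.mem_filter] at hg
      simp only [hGgt, Finset.mem_filter, hflipm]
      have := hmk g
      exact ⟨Finset.mem_univ _, by omega⟩
    · intro g _; exact hflipflip g
    · intro g _; exact hflipflip g
  have hsplit : Ggt.card + (Glt.card + Geq.card) = 2^n := by
    have h1 : Ggt.card + (U.filter (fun g => ¬ (k < 2 * m g))).card = U.card :=
      Finset.card_filter_add_card_filter_not _
    have h2 : U.filter (fun g => ¬ (k < 2 * m g)) = Glt ∪ Geq := by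
      rw [hGlt, hGeq, ← Finset.filter_or]
      apply Finset.filter_congr
      intro g _
      constructor
      · intro h; omega
      · intro h; omega
    have h3 : (Glt ∪ Geq).card = Glt.card + Geq.card := by
      apply Finset.card_union_of_disjoint
      rw [Finset.disjoint_filter]
      intro g _ h1 h2; omega
    have h4 : U.card = 2^n := by simp [hU]
    rw [h2, h3, h4] at h1
    exact h1
  -- bound ties
  obtain ⟨j0, hj0⟩ := hA
  set flip0 : (Fin n → Bool) → (Fin n → Bool) := fun g => Function.update g j0 (!g j0) with hflip0
  have hflip0flip0 : ∀ g, flip0 (flip0 g) = g := by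
    intro g; funext j
    by_cases hj : j = j0
    · subst hj; simp [hflip0]
    · simp [hflip0, Function.update, hj]
  have hflip0m : ∀ g, 2 * m g = k → 2 * m (flip0 g) ≠ k := by
    intro g hg
    by_cases h : g j0 = t j0
    · have hset : A.filter (fun j => flip0 g j ≠ t j)
          = insert j0 (A.filter (fun j => g j ≠ t j)) := by
        ext j
        by_cases hj : j = j0
        · subst hj
          simp [Function.update, hflip0, hj0, h]
        · simp [Function.update, hflip0, hj, Finset.mem_insert]
      have hj0nm : j0 ∉ A.filter (fun j => g j ≠ t j) := by simp [h]
      have : m (flip0 g) = m g + 1 := by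
        simp only [hm, hset]
        rw [Finset.card_insert_of_notMem hj0nm]
      omega
    · have hset : A.filter (fun j => flip0 g j ≠ t j)
          = (A.filter (fun j => g j ≠ t j)).erase j0 := by
        ext j
        by_cases hj : j = j0
        · subst hj
          simp only [Finset.mem_filter, Finset.mem_erase, Function.update, hflip0]
          simp [hj0]
          cases hgj : g j <;> cases htj : t j <;> simp_all
        · simp [Function.update, hflip0, hj, Finset.mem_erase]
      have hj0m : j0 ∈ A.filter (fun j => g j ≠ t j) := by simp [hj0, h]
      have : m (flip0 g) = m g - 1 := by
        simp only [hm, hset]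
        rw [Finset.card_erase_of_mem hj0m]
      have hm1 : 1 ≤ m g := Finset.card_pos.mpr ⟨j0, hj0m⟩
      omega
  have htie : 2 * Geq.card ≤ 2^n := by
    have hsub : Geq.card ≤ (U \ Geq).card := by
      apply Finset.card_le_card_of_injOn flip0
      · intro g hg
        simp only [Finset.mem_coe, hGeq, Finset.mem_filter] at hg
        simp only [Finset.mem_coe, Finset.mem_sdiff, hGeq, Finset.mem_filter]
        exact ⟨Finset.mem_univ _, fun h => hflip0m g hg.2 h.2⟩
      · intro g _ g' _ hgg'
        have := congrArg flip0 hgg'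
        rwa [hflip0flip0, hflip0flip0] at this
    have : (U \ Geq).card = 2^n - Geq.card := by
      rw [Finset.card_sdiff_of_subset (Finset.subset_univ _)]
      congr 1
      simp [hU]
    have hle : Geq.card ≤ 2^n := by
      calc Geq.card ≤ U.card := Finset.card_le_card (Finset.subset_univ _)
        _ = 2^n := by simp [hU]
    omega
  -- conclude
  show 2^(n-2) ≤ Ggt.card
  have hnpos : 0 < n := j0.pos
  rcases Nat.lt_or_ge n 2 with h | h
  · have hn1 : n = 1 := by omega
    have e1 : 2^(n-2) = 1 := by rw [hn1]; norm_num
    have e2 : 2^n = 2 := by rw [hn1]; norm_num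
    omega
  · have h4 : 2^n = 2^(n-2) * 4 := by
      have hn2 : n - 2 + 2 = n := by omega
      rw [← hn2, pow_add]
      norm_num
    omega

def expandStr {n : ℕ} (g : Fin n → Bool) : Fin (2*n) → Bool :=
  fun i => if i.val % 2 = 0 then g ⟨i.val / 2, by have := i.isLt; omega⟩
           else !g ⟨i.val / 2, by have := i.isLt; omega⟩

lemma expand_fst {n : ℕ} (g : Fin n → Bool) (j : Fin n) :
    expandStr g (pairFst j) = g j := by
  simp only [expandStr, pairFst, Nat.mul_mod_right, if_pos rfl]
  exact congrArg g (Fin.ext (show 2*j.val/2 = j.val by omega))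

lemma expand_snd {n : ℕ} (g : Fin n → Bool) (j : Fin n) :
    expandStr g (pairSnd j) = !g j := by
  have h1 : (2 * j.val + 1) % 2 = 1 := by omega
  simp only [expandStr, pairSnd, h1]
  norm_num
  exact congrArg g (Fin.ext (show (2*j.val+1)/2 = j.val by omega))

lemma expand_of_paired {n : ℕ} (f : Fin (2*n) → Bool)
    (hf : ∀ j : Fin n, f (pairFst j) ≠ f (pairSnd j)) :
    expandStr (fun j => f (pairFst j)) = f := by
  funext i
  have hi := i.isLt
  by_cases h : i.val % 2 = 0
  · rw [show i = pairFst ⟨i.val/2, by omega⟩ by ext; simp [pairFst]; omega]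
    rw [expand_fst]
  · rw [show i = pairSnd ⟨i.val/2, by omega⟩ by ext; simp [pairSnd]; omega]
    rw [expand_snd]
    have := hf ⟨i.val/2, by omega⟩
    cases hx : f (pairFst ⟨i.val/2, by omega⟩) <;>
      cases hy : f (pairSnd ⟨i.val/2, by omega⟩) <;> simp_all

lemma sum_range_two_mul (n : ℕ) (F : ℕ → ℕ) :
    ∑ i ∈ Finset.range (2*n), F i = ∑ j ∈ Finset.range n, (F (2*j) + F (2*j+1)) := by
  induction n with
  | zero => simp
  | succ n ih =>
    rw [show 2*(n+1) = 2*n+1+1 by ring, Finset.sum_range_succ, Finset.sum_range_succ,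
      Finset.sum_range_succ, ih]
    ring

lemma sum_fin_two_mul (n : ℕ) (F : Fin (2*n) → ℕ) :
    ∑ i, F i = ∑ j : Fin n, (F (pairFst j) + F (pairSnd j)) := by
  set F' : ℕ → ℕ := fun i => if h : i < 2*n then F ⟨i, h⟩ else 0 with hF'
  have h1 : ∑ i, F i = ∑ i ∈ Finset.range (2*n), F' i := by
    rw [← Fin.sum_univ_eq_sum_range]
    apply Finset.sum_congr rfl
    intro i _
    simp [hF', i.isLt]
  have h2 : ∑ j : Fin n, (F (pairFst j) + F (pairSnd j))
      = ∑ j ∈ Finset.range n, (F' (2*j) + F' (2*j+1)) := by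
    rw [← Fin.sum_univ_eq_sum_range (fun j => F' (2*j) + F' (2*j+1)) n]
    apply Finset.sum_congr rfl
    intro j _
    have hj := j.isLt
    have e1 : 2*j.val < 2*n := by omega
    have e2 : 2*j.val+1 < 2*n := by omega
    simp only [hF', dif_pos e1, dif_pos e2]
    rfl
  rw [h1, h2, sum_range_two_mul]

lemma hamming_expand {n : ℕ} (s : Fin (2*n) → Bool) (g : Fin n → Bool) :
    hammingDist s (expandStr g)
      = 2 * ((Finset.univ.filter (fun j : Fin n => s (pairFst j) ≠ s (pairSnd j))).filter
          (fun j => g j ≠ s (pairFst j))).card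
        + (n - (Finset.univ.filter (fun j : Fin n => s (pairFst j) ≠ s (pairSnd j))).card) := by
  classical
  set A : Finset (Fin n) := Finset.univ.filter (fun j => s (pairFst j) ≠ s (pairSnd j)) with hA
  have hd : hammingDist s (expandStr g)
      = ∑ i : Fin (2*n), (if s i ≠ expandStr g i then 1 else 0) := by
    rw [hammingDist, Finset.card_filter]
  rw [hd, sum_fin_two_mul]
  have hterm : ∀ j : Fin n,
      ((if s (pairFst j) ≠ expandStr g (pairFst j) then 1 else 0)
        + (if s (pairSnd j) ≠ expandStr g (pairSnd j) then 1 else 0))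
      = if j ∈ A then 2 * (if g j ≠ s (pairFst j) then 1 else 0) else 1 := by
    intro j
    rw [expand_fst, expand_snd]
    by_cases hj : j ∈ A
    · rw [if_pos hj]
      have hne : s (pairFst j) ≠ s (pairSnd j) := by
        simpa [hA] using hj
      cases h1 : s (pairFst j) <;> cases h2 : s (pairSnd j) <;>
        cases h3 : g j <;> simp_all
    · rw [if_neg hj]
      have heq : s (pairFst j) = s (pairSnd j) := by
        by_contra hne
        exact hj (by simp [hA, hne])
      cases h1 : s (pairFst j) <;> cases h2 : s (pairSnd j) <;>
        cases h3 : g j <;> simp_all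
  rw [Finset.sum_congr rfl (fun j _ => hterm j)]
  rw [← Finset.sum_filter_add_sum_filter_not Finset.univ (· ∈ A)]
  have hA1 : ∑ j ∈ Finset.univ.filter (· ∈ A),
      (if j ∈ A then 2 * (if g j ≠ s (pairFst j) then 1 else 0) else 1)
      = 2 * (A.filter (fun j => g j ≠ s (pairFst j))).card := by
    rw [Finset.filter_univ_mem]
    rw [Finset.sum_congr rfl (fun j hj => if_pos hj), ← Finset.mul_sum]
    congr 1
    rw [Finset.card_filter]
  have hA2 : ∑ j ∈ Finset.univ.filter (· ∉ A),
      (if j ∈ A then 2 * (if g j ≠ s (pairFst j) then 1 else 0) else 1)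
      = n - A.card := by
    rw [Finset.sum_congr rfl (fun j hj => if_neg (by simpa using hj))]
    simp only [Finset.sum_const, smul_eq_mul, mul_one]
    rw [Finset.filter_not, Finset.filter_univ_mem, Finset.card_sdiff_of_subset (Finset.subset_univ _),
      Finset.card_univ, Fintype.card_fin]
  rw [hA1, hA2]

/-- If `s` is not paired-constant, then at least `2^(n-2)` of the `2^n` strings
`f ∈ P_n` (each consecutive pair of `f` is `01` or `10`) satisfy `d(s,f) ≥ n+1`,
i.e. a uniformly random `f ∈ P_n` satisfies `d(s,f) ≥ n+1` with probability
at least `1/4`. -/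
theorem stmt2 (n : ℕ) (hn : 1 ≤ n) (s : Fin (2*n) → Bool)
    (hs : ∃ j : Fin n, s (pairFst j) ≠ s (pairSnd j)) :
    2^(n-2) ≤ (Finset.univ.filter (fun f : Fin (2*n) → Bool =>
      (∀ j : Fin n, f (pairFst j) ≠ f (pairSnd j)) ∧ n + 1 ≤ hammingDist s f)).card := by
  classical
  obtain ⟨j1, hj1⟩ := hs
  have hAne : (Finset.univ.filter (fun j : Fin n => s (pairFst j) ≠ s (pairSnd j))).Nonempty :=
    ⟨j1, by simp [hj1]⟩
  set A : Finset (Fin n) := Finset.univ.filter (fun j => s (pairFst j) ≠ s (pairSnd j)) with hA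
  have hkn : A.card ≤ n := by
    calc A.card ≤ Finset.univ.card := Finset.card_le_card (Finset.subset_univ _)
    _ = n := by simp
  have hcards : (Finset.univ.filter (fun f : Fin (2*n) → Bool =>
      (∀ j : Fin n, f (pairFst j) ≠ f (pairSnd j)) ∧ n + 1 ≤ hammingDist s f)).card
      = (Finset.univ.filter (fun g : Fin n → Bool =>
          A.card < 2 * (A.filter (fun j => g j ≠ s (pairFst j))).card)).card := by
    apply Finset.card_bij' (fun f _ => fun j : Fin n => f (pairFst j))
      (fun g _ => expandStr g)
    · intro f hf
      simp only [Finset.mem_filter] at hf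
      obtain ⟨-, hpair, hd⟩ := hf
      simp only [Finset.mem_filter]
      refine ⟨Finset.mem_univ _, ?_⟩
      have hh := hamming_expand s (fun j => f (pairFst j))
      rw [expand_of_paired f hpair] at hh
      rw [← hA] at hh
      omega
    · intro g hg
      simp only [Finset.mem_filter] at hg
      simp only [Finset.mem_filter]
      refine ⟨Finset.mem_univ _, fun j => ?_, ?_⟩
      · rw [expand_fst, expand_snd]
        cases g j <;> simp
      · have hh := hamming_expand s g
        rw [← hA] at hh
        omega
    · intro f hf
      simp only [Finset.mem_filter] at hf
      exact expand_of_paired f hf.2.1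
    · intro g _
      funext j
      exact expand_fst g j
  rw [hcards]
  exact count_majority A hAne _
end

section
/- Let n ≥ 1, m ≥ n, and c = 20. Let F = (f_1, …, f_{cm}) be a tuple of cm strings selected uniformly and independently at random from P_n (i.e., F is uniform over P_n^{cm}). Then with probability at least 1 − 0.9^n, the following holds: every string s : Fin (2n) → Bool that is not paired-constant satisfies d(s, f_i) > n for at least m indices i ∈ {1, …, cm}. -/
/-- The set `P_n` of strings of length `2n` whose consecutive pairs are all `01` or `10`. -/
def Pn (n : ℕ) : Finset (Fin (2*n) → Bool) :=
  Finset.univ.filter (fun f => ∀ j : Fin n, f (pairFst j) ≠ f (pairSnd j))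


def enc {n : ℕ} (g : Fin n → Bool) : Fin (2*n) → Bool :=
  fun i => if i.val % 2 = 0 then g ⟨i.val / 2, by omega⟩ else !(g ⟨i.val / 2, by omega⟩)

lemma enc_pairFst {n : ℕ} (g : Fin n → Bool) (j : Fin n) : enc g (pairFst j) = g j := by
  have h0 : (2*j.val) % 2 = 0 := by omega
  simp only [enc, pairFst, h0, if_pos]
  congr 1
  exact Fin.ext (show (2*(j:ℕ))/2 = j by omega)

lemma enc_pairSnd {n : ℕ} (g : Fin n → Bool) (j : Fin n) : enc g (pairSnd j) = !(g j) := by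
  have h : (2*j.val+1) % 2 = 1 := by omega
  simp only [enc, pairSnd, if_neg (by omega : ¬(2*j.val+1) % 2 = 0)]
  congr 2
  exact (if_neg (show ¬ ((2*(j:ℕ)+1) % 2 = 0) by omega)).trans (congrArg (fun x => !g x) (Fin.ext (show (2*(j:ℕ)+1)/2 = j by omega)))

lemma enc_mem {n : ℕ} (g : Fin n → Bool) : enc g ∈ Pn n := by
  simp only [Pn, Finset.mem_filter, Finset.mem_univ, true_and]
  intro j
  rw [enc_pairFst, enc_pairSnd]
  cases g j <;> simp

lemma enc_inj {n : ℕ} : Function.Injective (enc (n := n)) := by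
  intro g h e
  funext j
  have := congrFun e (pairFst j)
  rwa [enc_pairFst, enc_pairFst] at this

lemma Pn_eq_image {n : ℕ} : Pn n = Finset.image enc Finset.univ := by
  ext f
  simp only [Finset.mem_image, Finset.mem_univ, true_and]
  constructor
  · intro hf
    simp only [Pn, Finset.mem_filter, Finset.mem_univ, true_and] at hf
    refine ⟨fun j => f (pairFst j), ?_⟩
    funext i
    rcases Nat.even_or_odd i.val with he | ho
    · have h2 : i.val % 2 = 0 := Nat.even_iff.mp he
      have : pairFst (⟨i.val / 2, by omega⟩ : Fin n) = i := Fin.ext (by simp [pairFst]; omega)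
      simp only [enc, h2, if_pos]
      rw [this]
    · have h2 : i.val % 2 = 1 := Nat.odd_iff.mp ho
      have hps : pairSnd (⟨i.val / 2, by omega⟩ : Fin n) = i := Fin.ext (by simp [pairSnd]; omega)
      have := hf ⟨i.val / 2, by omega⟩
      rw [hps] at this
      simp only [enc, h2]
      norm_num
      cases hcf : f (pairFst (⟨i.val / 2, by omega⟩ : Fin n)) <;>
        cases hci : f i <;> simp_all
  · rintro ⟨g, rfl⟩
    exact enc_mem g

lemma card_Pn {n : ℕ} : (Pn n).card = 2^n := by
  rw [Pn_eq_image, Finset.card_image_of_injective _ enc_inj]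
  simp

def pairEquiv (n : ℕ) : Fin n × Fin 2 ≃ Fin (2*n) where
  toFun p := ⟨2 * p.1.val + p.2.val, by have := p.1.isLt; have := p.2.isLt; omega⟩
  invFun i := (⟨i.val/2, by have := i.isLt; omega⟩, ⟨i.val % 2, by omega⟩)
  left_inv := by
    rintro ⟨j, r⟩
    have hj := j.isLt; have hr := r.isLt
    refine Prod.ext (Fin.ext ?_) (Fin.ext ?_) <;> simp <;> omega
  right_inv := by
    intro i
    exact Fin.ext (by simp; omega)

def wgt {n : ℕ} (s : Fin (2*n) → Bool) (j : Fin n) (b : Bool) : ℕ :=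
  (if s (pairFst j) ≠ b then 1 else 0) + (if s (pairSnd j) ≠ !b then 1 else 0)


lemma dist_enc {n : ℕ} (s : Fin (2*n) → Bool) (g : Fin n → Bool) :
    hammingDist s (enc g) = ∑ j : Fin n, wgt s j (g j) := by
  classical
  have h1 : hammingDist s (enc g) = ∑ i : Fin (2*n), (if s i ≠ enc g i then 1 else 0) := by
    rw [hammingDist]
    rw [Finset.card_filter]
  rw [h1, ← Equiv.sum_comp (pairEquiv n) (fun i => if s i ≠ enc g i then 1 else 0)]
  rw [Fintype.sum_prod_type]
  refine Finset.sum_congr rfl (fun j _ => ?_)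
  rw [Fin.sum_univ_two]
  have e0 : pairEquiv n (j, 0) = pairFst j := Fin.ext (by simp [pairEquiv, pairFst])
  have e1 : pairEquiv n (j, 1) = pairSnd j := Fin.ext (by simp [pairEquiv, pairSnd])
  have hf : enc g (pairFst j) = g j := by
    have h0 : (2*j.val) % 2 = 0 := by omega
    simp only [enc, pairFst, h0, if_pos]
    congr 1
    exact Fin.ext (show (2*(j:ℕ))/2 = j by omega)
  have hs : enc g (pairSnd j) = !(g j) := by
    simp only [enc, pairSnd, if_neg (by omega : ¬(2*j.val+1) % 2 = 0)]
    congr 2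
    exact (if_neg (show ¬ ((2*(j:ℕ)+1) % 2 = 0) by omega)).trans (congrArg (fun x => !g x) (Fin.ext (show (2*(j:ℕ)+1)/2 = j by omega)))
  rw [e0, e1, hf, hs, wgt]

lemma wgt_add_wgt {n : ℕ} (s : Fin (2*n) → Bool) (j : Fin n) (b : Bool) :
    wgt s j b + wgt s j (!b) = 2 := by
  unfold wgt
  cases hb : b <;> cases h1 : s (pairFst j) <;> cases h2 : s (pairSnd j) <;> simp

lemma wgt_ne {n : ℕ} (s : Fin (2*n) → Bool) (j : Fin n) (b : Bool)
    (h : s (pairFst j) ≠ s (pairSnd j)) : wgt s j b ≠ wgt s j (!b) := by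
  unfold wgt
  cases hb : b <;> cases h1 : s (pairFst j) <;> cases h2 : s (pairSnd j) <;> simp_all

lemma count_le {n : ℕ} (s : Fin (2*n) → Bool) (j0 : Fin n)
    (hj0 : s (pairFst j0) ≠ s (pairSnd j0)) :
    4 * (Finset.univ.filter
      (fun g : Fin n → Bool => ∑ j, wgt s j (g j) ≤ n)).card ≤ 3 * 2^n := by
  classical
  set D : (Fin n → Bool) → ℕ := fun g => ∑ j, wgt s j (g j) with hD
  have flip_sum : ∀ g : Fin n → Bool, D g + D (fun j => !(g j)) = 2*n := by
    intro g
    rw [hD]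
    simp only []
    rw [← Finset.sum_add_distrib, Finset.sum_congr rfl (fun j _ => wgt_add_wgt s j (g j))]
    simp [mul_comm]
  set Dlt := Finset.univ.filter (fun g : Fin n → Bool => D g < n) with hDlt
  set Deq := Finset.univ.filter (fun g : Fin n → Bool => D g = n) with hDeq
  set Dgt := Finset.univ.filter (fun g : Fin n → Bool => n < D g) with hDgt
  have hcardU : (Finset.univ : Finset (Fin n → Bool)).card = 2^n := by simp
  -- |Dlt| = |Dgt|
  have h1 : Dlt.card = Dgt.card := by
    apply Finset.card_bij' (fun g _ => fun j => !(g j)) (fun g _ => fun j => !(g j))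
    · intro g hg
      simp only [hDlt, Finset.mem_filter, Finset.mem_univ, true_and] at hg
      simp only [hDgt, Finset.mem_filter, Finset.mem_univ, true_and]
      have := flip_sum g
      omega
    · intro g hg
      simp only [hDgt, Finset.mem_filter, Finset.mem_univ, true_and] at hg
      simp only [hDlt, Finset.mem_filter, Finset.mem_univ, true_and]
      have := flip_sum (fun j => !(g j))
      have hgg : (fun j => !(!(g j))) = g := by funext j; simp
      rw [hgg] at this
      omega
    · intro g _; funext j; simp
    · intro g _; funext j; simp
  -- trichotomy
  have htot : Dlt.card + Deq.card + Dgt.card = 2^n := by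
    have e1 : Finset.univ.filter (fun g : Fin n → Bool => ¬ D g < n) = Deq ∪ Dgt := by
      ext g
      simp only [hDeq, hDgt, Finset.mem_filter, Finset.mem_univ, true_and, Finset.mem_union]
      omega
    have e2 : Disjoint Deq Dgt := by
      rw [Finset.disjoint_left]
      intro g hg hg'
      simp only [hDeq, Finset.mem_filter, Finset.mem_univ, true_and] at hg
      simp only [hDgt, Finset.mem_filter, Finset.mem_univ, true_and] at hg'
      omega
    have := Finset.card_filter_add_card_filter_not
      (s := (Finset.univ : Finset (Fin n → Bool))) (p := fun g => D g < n)
    rw [hcardU] at this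
    rw [e1, Finset.card_union_of_disjoint e2] at this
    rw [← hDlt] at this
    omega
  -- 2 |Deq| ≤ 2^n
  have h3 : 2 * Deq.card ≤ 2^n := by
    set ι : (Fin n → Bool) → (Fin n → Bool) := fun g => Function.update g j0 (!(g j0)) with hι
    have hne : ∀ g, D (ι g) ≠ D g := by
      intro g
      have e1 : D g = wgt s j0 (g j0) + ∑ j ∈ Finset.univ.erase j0, wgt s j (g j) :=
        (Finset.add_sum_erase _ _ (Finset.mem_univ j0)).symm
      have e2 : D (ι g) = wgt s j0 (!(g j0)) + ∑ j ∈ Finset.univ.erase j0, wgt s j (g j) := by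
        rw [show D (ι g) = wgt s j0 (ι g j0) + ∑ j ∈ Finset.univ.erase j0, wgt s j (ι g j) from
          (Finset.add_sum_erase _ _ (Finset.mem_univ j0)).symm]
        congr 1
        · rw [hι]; simp [Function.update_self]
        · refine Finset.sum_congr rfl (fun j hj => ?_)
          have : j ≠ j0 := (Finset.mem_erase.mp hj).1
          rw [hι]; simp [Function.update_of_ne this]
      rw [e1, e2]
      have := wgt_ne s j0 (g j0) hj0
      omega
    have hinj : Set.InjOn ι Deq := by
      intro g _ g' _ he
      funext j
      rcases eq_or_ne j j0 with hj | hj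
      · have h0 := congrFun he j0
        simp only [hι, Function.update_self] at h0
        rw [hj]
        exact Bool.not_inj h0
      · have := congrFun he j
        simpa [hι, Function.update_of_ne hj] using this
    have hmaps : ∀ g ∈ Deq, ι g ∈ Finset.univ.filter (fun g => ¬ D g = n) := by
      intro g hg
      simp only [hDeq, Finset.mem_filter, Finset.mem_univ, true_and] at hg ⊢
      intro hcon
      exact hne g (by rw [hcon, hg])
    have hle : Deq.card ≤ (Finset.univ.filter (fun g : Fin n → Bool => ¬ D g = n)).card :=
      Finset.card_le_card_of_injOn ι hmaps hinj
    have := Finset.card_filter_add_card_filter_not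
      (s := (Finset.univ : Finset (Fin n → Bool))) (p := fun g => D g = n)
    rw [hcardU] at this
    rw [← hDeq] at this
    omega
  -- conclusion
  have hBsplit : (Finset.univ.filter (fun g : Fin n → Bool => D g ≤ n)).card
      = Dlt.card + Deq.card := by
    have e1 : Finset.univ.filter (fun g : Fin n → Bool => D g ≤ n) = Dlt ∪ Deq := by
      ext g
      simp only [hDlt, hDeq, Finset.mem_filter, Finset.mem_univ, true_and, Finset.mem_union]
      omega
    have e2 : Disjoint Dlt Deq := by
      rw [Finset.disjoint_left]
      intro g hg hg'
      simp only [hDlt, Finset.mem_filter, Finset.mem_univ, true_and] at hg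
      simp only [hDeq, Finset.mem_filter, Finset.mem_univ, true_and] at hg'
      omega
    rw [e1, Finset.card_union_of_disjoint e2]
  rw [hBsplit]
  omega


lemma choose_le_num (m : ℕ) (hm : 1 ≤ m) :
    ((20*m).choose (19*m+1)) * 19^(19*m+1) ≤ 20^(20*m) := by
  have h : (20:ℕ)^(20*m) = (19+1)^(20*m) := by norm_num
  rw [h, add_pow]
  have hmem : 19*m+1 ∈ Finset.range (20*m+1) := by
    rw [Finset.mem_range]; omega
  calc ((20*m).choose (19*m+1)) * 19^(19*m+1)
      = 19^(19*m+1) * 1^(20*m - (19*m+1)) * (20*m).choose (19*m+1) := by ring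
    _ ≤ ∑ k ∈ Finset.range (20*m+1), 19^k * 1^(20*m-k) * (20*m).choose k :=
        Finset.single_le_sum (f := fun k => 19^k * 1^(20*m-k) * (20*m).choose k)
          (fun k _ => Nat.zero_le _) hmem

lemma numeric (n m : ℕ) (hn : 1 ≤ n) (hm : n ≤ m) :
    (2:ℝ)^(2*n) * (((20*m).choose (19*m+1)) : ℝ) * ((3:ℝ)/4)^(19*m+1) ≤ (9/10:ℝ)^n := by
  have hm1 : 1 ≤ m := le_trans hn hm
  have hc : (((20*m).choose (19*m+1)) : ℝ) ≤ 20^(20*m) / 19^(19*m+1) := by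
    rw [le_div_iff₀ (by positivity)]
    exact_mod_cast choose_le_num m hm1
  have key : ((20:ℝ)^20*3^19/(19^19*4^19)) ≤ 9/40 := by
    rw [div_le_div_iff₀ (by positivity) (by positivity)]
    norm_num
  calc (2:ℝ)^(2*n) * (((20*m).choose (19*m+1)) : ℝ) * ((3:ℝ)/4)^(19*m+1)
      ≤ (2:ℝ)^(2*n) * ((20:ℝ)^(20*m) / 19^(19*m+1)) * ((3:ℝ)/4)^(19*m+1) := by
        have h1 : (0:ℝ) ≤ (2:ℝ)^(2*n) := by positivity
        have h2 : (0:ℝ) ≤ ((3:ℝ)/4)^(19*m+1) := by positivity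
        exact mul_le_mul_of_nonneg_right (mul_le_mul_of_nonneg_left hc h1) h2
    _ = (4:ℝ)^n * (((20:ℝ)^20*3^19/(19^19*4^19))^m * (3/76)) := by
        have e1 : (20:ℝ)^(20*m) = ((20:ℝ)^20)^m := by rw [← pow_mul]
        have e2 : (19:ℝ)^(19*m+1) = ((19:ℝ)^19)^m * 19 := by
          rw [pow_add, ← pow_mul, pow_one]
        have e3 : ((3:ℝ)/4)^(19*m+1) = (((3:ℝ)/4)^19)^m * (3/4) := by
          rw [pow_add, ← pow_mul, pow_one]
        have e4 : ((3:ℝ)/4)^(19:ℕ) = 3^(19:ℕ)/4^(19:ℕ) := div_pow 3 4 19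
        have e5 : ((20:ℝ)^20*3^19/(19^19*4^19))^m
            = ((20:ℝ)^20)^m*((3:ℝ)^19)^m/(((19:ℝ)^19)^m*((4:ℝ)^19)^m) := by
          rw [div_pow, mul_pow, mul_pow]
        rw [e1, e2, e3, e4, e5, show (2:ℝ)^(2*n) = 4^n by rw [pow_mul]; norm_num]
        rw [div_pow]
        field_simp
        ring
    _ ≤ (4:ℝ)^n * ((9/40:ℝ)^m * (3/76)) := by
        have := pow_le_pow_left₀ (by positivity : (0:ℝ) ≤ (20:ℝ)^20*3^19/(19^19*4^19)) key m
        have h1 : (0:ℝ) ≤ (4:ℝ)^n := by positivity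
        nlinarith [this, h1, pow_nonneg (by norm_num : (0:ℝ) ≤ 9/40) m]
    _ ≤ (4:ℝ)^n * ((9/40:ℝ)^n * 1) := by
        have h1 : ((9:ℝ)/40)^m ≤ (9/40)^n :=
          pow_le_pow_of_le_one (by norm_num) (by norm_num) hm
        have h2 : (0:ℝ) ≤ (4:ℝ)^n := by positivity
        nlinarith [pow_nonneg (by norm_num : (0:ℝ) ≤ 9/40) m]
    _ ≤ (9/10:ℝ)^n := by
        rw [mul_one, ← mul_pow]
        norm_num


lemma Qcard_le {n : ℕ} (s : Fin (2*n) → Bool) (j0 : Fin n)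
    (hj0 : s (pairFst j0) ≠ s (pairSnd j0)) :
    4 * ((Pn n).filter (fun f => hammingDist s f ≤ n)).card ≤ 3 * 2^n := by
  classical
  have himg : (Pn n).filter (fun f => hammingDist s f ≤ n)
      = Finset.image enc (Finset.univ.filter (fun g => hammingDist s (enc g) ≤ n)) := by
    rw [Pn_eq_image, Finset.filter_image]
  rw [himg, Finset.card_image_of_injective _ enc_inj]
  have heq : Finset.univ.filter (fun g : Fin n → Bool => hammingDist s (enc g) ≤ n)
      = Finset.univ.filter (fun g => ∑ j, wgt s j (g j) ≤ n) := by
    apply Finset.filter_congr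
    intro g _
    rw [dist_enc]
  rw [heq]
  exact count_le s j0 hj0
lemma main_count (n m : ℕ) (hn : 1 ≤ n) (hm : n ≤ m) :
    (1 - (0.9 : ℝ)^n) *
      (((Finset.univ.filter (fun F : Fin (20*m) → Fin (2*n) → Bool =>
        ∀ i, F i ∈ Pn n)).card : ℝ)) ≤
    (((Finset.univ.filter (fun F : Fin (20*m) → Fin (2*n) → Bool =>
        ∀ i, F i ∈ Pn n)).filter (fun F => ∀ s : Fin (2*n) → Bool,
        (∃ j : Fin n, s (pairFst j) ≠ s (pairSnd j)) →
        m ≤ (Finset.univ.filter (fun i : Fin (20*m) => n < hammingDist s (F i))).card)).card : ℝ) := by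
  classical
  set Ω := Finset.univ.filter (fun F : Fin (20*m) → Fin (2*n) → Bool => ∀ i, F i ∈ Pn n) with hΩ
  set P : (Fin (20*m) → Fin (2*n) → Bool) → Prop := fun F => ∀ s : Fin (2*n) → Bool,
        (∃ j : Fin n, s (pairFst j) ≠ s (pairSnd j)) →
        m ≤ (Finset.univ.filter (fun i : Fin (20*m) => n < hammingDist s (F i))).card with hP
  set bad := Ω.filter (fun F => ¬ P F) with hbad
  have hsum : (Ω.filter P).card + bad.card = Ω.card :=
    Finset.card_filter_add_card_filter_not (p := P)
  -- Ω cardinality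
  have hΩpi : Ω = Fintype.piFinset (fun _ : Fin (20*m) => Pn n) := by
    ext F
    simp [hΩ, Fintype.mem_piFinset]
  have hΩcard : Ω.card = (2^n)^(20*m) := by
    rw [hΩpi, Fintype.card_piFinset]
    simp [card_Pn]
  set k := 19*m+1 with hk
  have hm1 : 1 ≤ m := le_trans hn hm
  have hkle : k ≤ 20*m := by omega
  set S := Finset.univ.filter (fun s : Fin (2*n) → Bool =>
    ∃ j : Fin n, s (pairFst j) ≠ s (pairSnd j)) with hS
  set Dst : (Fin (2*n) → Bool) → Finset (Fin (20*m)) → Finset (Fin (20*m) → Fin (2*n) → Bool) :=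
    fun s T => Fintype.piFinset (fun i =>
      if i ∈ T then (Pn n).filter (fun f => hammingDist s f ≤ n) else Pn n) with hDst
  -- bad is covered
  have hsub : bad ⊆ S.biUnion (fun s =>
      (Finset.powersetCard k Finset.univ).biUnion (fun T => Dst s T)) := by
    intro F hF
    simp only [hbad, Finset.mem_filter] at hF
    obtain ⟨hFΩ, hFbad⟩ := hF
    rw [hP] at hFbad
    simp only [not_forall, Classical.not_imp] at hFbad
    obtain ⟨s, hs, hcard⟩ := hFbad
    have h2 := Finset.card_filter_add_card_filter_not
      (s := (Finset.univ : Finset (Fin (20*m)))) (p := fun i => n < hammingDist s (F i))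
    have hcu : (Finset.univ : Finset (Fin (20*m))).card = 20*m := by simp
    have hge : k ≤ (Finset.univ.filter (fun i => ¬ n < hammingDist s (F i))).card := by omega
    obtain ⟨T, hTsub, hTcard⟩ := Finset.exists_subset_card_eq hge
    refine Finset.mem_biUnion.mpr ⟨s, ?_, Finset.mem_biUnion.mpr ⟨T, ?_, ?_⟩⟩
    · simp only [hS, Finset.mem_filter, Finset.mem_univ, true_and]
      exact hs
    · exact Finset.mem_powersetCard_univ.mpr hTcard
    · rw [hDst]
      rw [Fintype.mem_piFinset]
      intro i
      have hFi : F i ∈ Pn n := by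
        simp only [hΩ, Finset.mem_filter] at hFΩ
        exact hFΩ.2 i
      by_cases hiT : i ∈ T
      · rw [if_pos hiT]
        refine Finset.mem_filter.mpr ⟨hFi, ?_⟩
        have := hTsub hiT
        simp only [Finset.mem_filter, Finset.mem_univ, true_and] at this
        omega
      · rw [if_neg hiT]
        exact hFi
  -- per-cell cardinality bound
  have hDcard : ∀ s ∈ S, ∀ T ∈ Finset.powersetCard k Finset.univ,
      ((Dst s T).card : ℝ) ≤ (3/4)^k * ((2:ℝ)^n)^(20*m) := by
    intro s hs T hT
    obtain ⟨j0, hj0⟩ := (Finset.mem_filter.mp hs).2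
    have hq := Qcard_le s j0 hj0
    have hTcard : T.card = k := Finset.mem_powersetCard_univ.mp hT
    set Q := (Pn n).filter (fun f => hammingDist s f ≤ n) with hQ
    have hc : (Dst s T).card = Q.card ^ k * (2^n)^(20*m - k) := by
      rw [hDst]
      simp only []
      rw [Fintype.card_piFinset]
      have hcards : ∀ i : Fin (20*m),
          (if i ∈ T then Q else Pn n).card = if i ∈ T then Q.card else 2^n := by
        intro i
        by_cases hiT : i ∈ T
        · rw [if_pos hiT, if_pos hiT]
        · rw [if_neg hiT, if_neg hiT, card_Pn]
      rw [Finset.prod_congr rfl (fun i _ => hcards i)]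
      rw [← Finset.prod_mul_prod_compl T]
      rw [Finset.prod_congr rfl (fun i hi => if_pos hi),
        Finset.prod_congr rfl (fun i hi => if_neg (Finset.mem_compl.mp hi))]
      rw [Finset.prod_const, Finset.prod_const, hTcard, Finset.card_compl]
      simp [hTcard]
    rw [hc]
    push_cast
    have hq' : (Q.card : ℝ) ≤ (3/4) * 2^n := by
      have : (4 * Q.card : ℝ) ≤ 3 * 2^n := by exact_mod_cast hq
      linarith
    calc (Q.card : ℝ)^k * ((2:ℝ)^n)^(20*m - k)
        ≤ ((3/4) * 2^n)^k * ((2:ℝ)^n)^(20*m-k) := by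
          apply mul_le_mul_of_nonneg_right _ (by positivity)
          exact pow_le_pow_left₀ (by positivity) hq' k
      _ = (3/4)^k * (((2:ℝ)^n)^k * ((2:ℝ)^n)^(20*m-k)) := by rw [mul_pow]; ring
      _ = (3/4)^k * ((2:ℝ)^n)^(20*m) := by
          rw [← pow_add]
          congr 2
          omega
  -- combine
  have hbadcard : (bad.card : ℝ) ≤
      (2:ℝ)^(2*n) * (((20*m).choose k : ℕ) : ℝ) * ((3/4)^k * ((2:ℝ)^n)^(20*m)) := by
    have h1 : bad.card ≤ ∑ s ∈ S, ((Finset.powersetCard k Finset.univ).biUnion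
        (fun T => Dst s T)).card :=
      le_trans (Finset.card_le_card hsub) (Finset.card_biUnion_le)
    have h2 : ∀ s ∈ S, ((Finset.powersetCard k Finset.univ).biUnion
        (fun T => Dst s T)).card ≤ ∑ T ∈ Finset.powersetCard k Finset.univ, (Dst s T).card :=
      fun s _ => Finset.card_biUnion_le
    have h3 : (bad.card : ℝ) ≤ ∑ s ∈ S, ∑ T ∈ Finset.powersetCard k Finset.univ,
        ((Dst s T).card : ℝ) := by
      push_cast
      exact_mod_cast le_trans h1 (Finset.sum_le_sum h2)
    have h4 : ∑ s ∈ S, ∑ T ∈ Finset.powersetCard k Finset.univ, ((Dst s T).card : ℝ)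
        ≤ ∑ _s ∈ S, ∑ _T ∈ Finset.powersetCard k (Finset.univ : Finset (Fin (20*m))),
          ((3/4:ℝ)^k * ((2:ℝ)^n)^(20*m)) := by
      apply Finset.sum_le_sum
      intro s hs
      exact Finset.sum_le_sum (fun T hT => hDcard s hs T hT)
    have h5 : ∑ _s ∈ S, ∑ _T ∈ Finset.powersetCard k (Finset.univ : Finset (Fin (20*m))),
          ((3/4:ℝ)^k * ((2:ℝ)^n)^(20*m))
        = (S.card : ℝ) * (((20*m).choose k : ℕ) : ℝ) * ((3/4)^k * ((2:ℝ)^n)^(20*m)) := by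
      rw [Finset.sum_const, Finset.sum_const, Finset.card_powersetCard]
      simp only [nsmul_eq_mul, Finset.card_univ, Fintype.card_fin]
      push_cast
      ring
    have hScard : (S.card : ℝ) ≤ (2:ℝ)^(2*n) := by
      have : S.card ≤ 2^(2*n) := by
        refine le_trans (Finset.card_filter_le _ _) ?_
        simp [Finset.card_univ]
      exact_mod_cast this
    calc (bad.card : ℝ) ≤ _ := le_trans h3 h4
      _ = _ := h5
      _ ≤ (2:ℝ)^(2*n) * (((20*m).choose k : ℕ) : ℝ) * ((3/4)^k * ((2:ℝ)^n)^(20*m)) := by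
        apply mul_le_mul_of_nonneg_right _ (by positivity)
        apply mul_le_mul_of_nonneg_right hScard (by positivity)
  have hnum := numeric n m hn hm
  have hfinal : (bad.card : ℝ) ≤ (9/10:ℝ)^n * (Ω.card : ℝ) := by
    rw [hΩcard]
    push_cast
    calc (bad.card : ℝ) ≤ _ := hbadcard
      _ = ((2:ℝ)^(2*n) * (((20*m).choose k : ℕ) : ℝ) * ((3:ℝ)/4)^k) * ((2:ℝ)^n)^(20*m) := by
        ring
      _ ≤ (9/10:ℝ)^n * ((2:ℝ)^n)^(20*m) := by
        apply mul_le_mul_of_nonneg_right _ (by positivity)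
        exact hnum
  -- finish
  have h09 : (0.9 : ℝ) = 9/10 := by norm_num
  have hgood : ((Ω.filter P).card : ℝ) = (Ω.card : ℝ) - (bad.card : ℝ) := by
    have := hsum
    push_cast [← this]
    ring
  rw [h09, hgood, sub_mul, one_mul]
  linarith

/-- Lemma 2 (structural lemma): with `c = 20` and `m ≥ n ≥ 1`, if `F` is a tuple of
`c·m` strings chosen uniformly and independently from `P_n`, then with probability at
least `1 - 0.9^n` every string `s` that is not paired-constant has Hamming distance
greater than `n` from at least `m` of the strings in `F`.  (Stated by counting: the
number of good tuples is at least `(1 - 0.9^n)` times the total number of tuples.) -/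
theorem stmt3 (n m : ℕ) (hn : 1 ≤ n) (hm : n ≤ m) :
    let c : ℕ := 20
    let Ω : Finset (Fin (c*m) → Fin (2*n) → Bool) :=
      Finset.univ.filter (fun F => ∀ i, F i ∈ Pn n)
    let good : Finset (Fin (c*m) → Fin (2*n) → Bool) :=
      Ω.filter (fun F => ∀ s : Fin (2*n) → Bool,
        (∃ j : Fin n, s (pairFst j) ≠ s (pairSnd j)) →
        m ≤ (Finset.univ.filter (fun i : Fin (c*m) => n < hammingDist s (F i))).card)
    (1 - (0.9 : ℝ)^n) * (Ω.card : ℝ) ≤ (good.card : ℝ) := by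
  intro c Ω good
  exact main_count n m hn hm
end

section
/- Let G be a simple graph on vertex set Fin L and let S be the finite set of strings consisting of the all-false string 0 together with the incidence strings χ(e) of all edges e of G. Let k be a natural number and let T ⊆ S be a subset with at most k bad columns. Then there exists a subset T' ⊆ S with at most k bad columns such that |T'| ≥ |T| and 0 ∈ T'. -/
/-- The incidence string of an edge `e`: `true` exactly at the endpoints of `e`. -/
def chi {L : ℕ} (e : Sym2 (Fin L)) : Fin L → Bool := fun i => decide (i ∈ e)

/-- The set of bad columns of a finite set `T` of strings: columns where not all
strings of `T` agree. -/
def badCols {L : ℕ} (T : Finset (Fin L → Bool)) : Finset (Fin L) :=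
  Finset.univ.filter (fun t => ∃ u ∈ T, ∃ v ∈ T, u t ≠ v t)

lemma mem_badCols {L : ℕ} {T : Finset (Fin L → Bool)} {t : Fin L} :
    t ∈ badCols T ↔ ∃ u ∈ T, ∃ v ∈ T, u t ≠ v t := by
  simp [badCols]

lemma chi_eq_true {L : ℕ} {e : Sym2 (Fin L)} {i : Fin L} :
    chi e i = true ↔ i ∈ e := by simp [chi]

lemma badCols_empty {L : ℕ} : badCols (∅ : Finset (Fin L → Bool)) = ∅ := by
  ext t; simp [mem_badCols]

lemma badCols_singleton {L : ℕ} (u : Fin L → Bool) : badCols {u} = ∅ := by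
  ext t; simp [mem_badCols]

/-- Lemma (`0` can be assumed in the solution): with `S` consisting of the all-false
string together with the incidence strings of the edges of a simple graph `G`, any
`T ⊆ S` with at most `k` bad columns can be replaced by a `T' ⊆ S` with at most `k`
bad columns, at least as many strings, and containing the all-false string. -/
theorem stmt11 (L : ℕ) (G : SimpleGraph (Fin L)) [DecidableRel G.Adj] (k : ℕ)
    (S : Finset (Fin L → Bool))
    (hS : S = insert (fun _ => false) (G.edgeFinset.image chi))
    (T : Finset (Fin L → Bool)) (hT : T ⊆ S) (hbad : (badCols T).card ≤ k) :
    ∃ T' ⊆ S, (badCols T').card ≤ k ∧ T.card ≤ T'.card ∧ (fun _ => false) ∈ T' := by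
  have hzS : (fun _ => false) ∈ S := by rw [hS]; exact Finset.mem_insert_self _ _
  -- Case: T empty
  rcases Finset.eq_empty_or_nonempty T with hTe | ⟨u₀, hu₀⟩
  · refine ⟨{fun _ => false}, ?_, ?_, ?_, ?_⟩
    · simpa using hzS
    · simp [badCols_singleton]
    · simp [hTe]
    · simp
  by_cases hA : ∃ a : Fin L, ∀ u ∈ T, u a = true
  · -- all elements of T are true at column a
    obtain ⟨a, ha⟩ := hA
    -- every element of T is chi of an edge containing a
    have hedge : ∀ u ∈ T, ∃ e ∈ G.edgeFinset, chi e = u ∧ a ∈ e := by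
      intro u hu
      have := hT hu
      rw [hS, Finset.mem_insert] at this
      rcases this with h | h
      · exfalso; have := ha u hu; rw [h] at this; simp at this
      · obtain ⟨e, he, hce⟩ := Finset.mem_image.mp h
        refine ⟨e, he, hce, ?_⟩
        have := ha u hu
        rw [← hce] at this
        exact chi_eq_true.mp this
    obtain ⟨e₀, he₀, hce₀, hae₀⟩ := hedge u₀ hu₀
    have hnd : ¬e₀.IsDiag :=
      G.not_isDiag_of_mem_edgeSet (SimpleGraph.mem_edgeFinset.mp he₀)
    set b : Fin L := Sym2.Mem.other hae₀ with hb
    have hbe₀ : s(a, b) = e₀ := Sym2.other_spec hae₀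
    have hba : b ≠ a := Sym2.other_ne hnd hae₀
    have hbmem : b ∈ e₀ := by rw [← hbe₀]; exact Sym2.mem_mk_right _ _
    -- any element of T other than u₀ is false at b
    have hfb : ∀ v ∈ T, v ≠ u₀ → v b = false := by
      intro v hv hvne
      obtain ⟨f, hf, hcf, haf⟩ := hedge v hv
      by_contra h
      have hbt : v b = true := by cases hvb : v b with
        | false => exact absurd hvb h | true => rfl
      have hbf : b ∈ f := chi_eq_true.mp (by rw [hcf]; exact hbt)
      have : f = s(a, b) := (Sym2.mem_and_mem_iff (Ne.symm hba)).mp ⟨haf, hbf⟩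
      rw [hbe₀] at this
      exact hvne (by rw [← hcf, ← hce₀, this])
    by_cases hsing : ∀ v ∈ T, v = u₀
    · -- T is a singleton: take {0}
      have : T = {u₀} := by
        apply Finset.eq_singleton_iff_unique_mem.mpr ⟨hu₀, hsing⟩
      refine ⟨{fun _ => false}, by simpa using hzS, by simp [badCols_singleton],
        by simp [this], by simp⟩
    · push_neg at hsing
      obtain ⟨v₀, hv₀, hv₀ne⟩ := hsing
      -- b is a bad column of T
      have hbbad : b ∈ badCols T := by
        rw [mem_badCols]
        refine ⟨u₀, hu₀, v₀, hv₀, ?_⟩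
        rw [hfb v₀ hv₀ hv₀ne]
        have : u₀ b = true := by
          rw [← hce₀]; exact chi_eq_true.mpr hbmem
        simp [this]
      refine ⟨insert (fun _ => false) (T.erase u₀), ?_, ?_, ?_, Finset.mem_insert_self _ _⟩
      · intro x hx
        rcases Finset.mem_insert.mp hx with h | h
        · rw [h]; exact hzS
        · exact hT (Finset.mem_of_mem_erase h)
      · -- bad columns bound: badCols T' ⊆ insert a ((badCols T).erase b)
        have hsub : badCols (insert (fun _ => false) (T.erase u₀)) ⊆
            insert a ((badCols T).erase b) := by
          intro t ht
          rw [mem_badCols] at ht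
          obtain ⟨u, hu, v, hv, huv⟩ := ht
          -- all elements of T' are false at b
          have hallb : ∀ w ∈ insert (fun _ => false) (T.erase u₀), w b = false := by
            intro w hw
            rcases Finset.mem_insert.mp hw with h | h
            · rw [h]
            · exact hfb w (Finset.mem_of_mem_erase h) (Finset.ne_of_mem_erase h)
          have htb : t ≠ b := by
            intro h; subst h
            rw [hallb u hu, hallb v hv] at huv
            exact huv rfl
          by_cases hta : t = a
          · rw [hta]; exact Finset.mem_insert_self _ _
          · apply Finset.mem_insert_of_mem
            rw [Finset.mem_erase]
            refine ⟨htb, ?_⟩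
            rw [mem_badCols]
            -- u₀ is false at t (t ≠ a, t ≠ b)
            have hu₀t : u₀ t = false := by
              rw [← hce₀]
              by_contra h
              have : t ∈ e₀ := chi_eq_true.mp (by cases h' : chi e₀ t with
                | false => exact absurd h' h | true => rfl)
              rw [← hbe₀] at this
              rcases Sym2.mem_iff.mp this with h' | h'
              · exact hta h'
              · exact htb h'
            rcases Finset.mem_insert.mp hu with h | h
            · -- u = 0, so v t = true, v ∈ T
              rcases Finset.mem_insert.mp hv with h' | h'
              · exfalso; rw [h, h'] at huv; exact huv rfl
              · have hvT := Finset.mem_of_mem_erase h'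
                refine ⟨v, hvT, u₀, hu₀, ?_⟩
                rw [hu₀t]
                rw [h] at huv
                cases hvt : v t with
                | false => exact absurd (by rw [hvt]) huv
                | true => simp [hvt]
            · rcases Finset.mem_insert.mp hv with h' | h'
              · have huT := Finset.mem_of_mem_erase h
                refine ⟨u, huT, u₀, hu₀, ?_⟩
                rw [hu₀t]
                rw [h'] at huv
                cases hut : u t with
                | false => exact absurd (by rw [hut]) huv
                | true => simp [hut]
              · exact ⟨u, Finset.mem_of_mem_erase h, v, Finset.mem_of_mem_erase h', huv⟩
        calc (badCols (insert (fun _ => false) (T.erase u₀))).card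
            ≤ (insert a ((badCols T).erase b)).card := Finset.card_le_card hsub
          _ ≤ ((badCols T).erase b).card + 1 := Finset.card_insert_le _ _
          _ = (badCols T).card := by
              rw [Finset.card_erase_of_mem hbbad]
              have : 1 ≤ (badCols T).card := Finset.card_pos.mpr ⟨b, hbbad⟩
              omega
          _ ≤ k := hbad
      · -- cardinality
        have h0ne : (fun _ => false) ∉ T.erase u₀ := by
          intro h
          have := ha _ (Finset.mem_of_mem_erase h)
          simp at this
        rw [Finset.card_insert_of_notMem h0ne, Finset.card_erase_of_mem hu₀]
        have : 1 ≤ T.card := Finset.card_pos.mpr ⟨u₀, hu₀⟩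
        omega
  · -- no all-true column: insert 0, bad columns unchanged
    push_neg at hA
    refine ⟨insert (fun _ => false) T, ?_, ?_, Finset.card_le_card (Finset.subset_insert _ _),
      Finset.mem_insert_self _ _⟩
    · intro x hx
      rcases Finset.mem_insert.mp hx with h | h
      · rw [h]; exact hzS
      · exact hT h
    · have : badCols (insert (fun _ => false) T) ⊆ badCols T := by
        intro t ht
        rw [mem_badCols] at ht ⊢
        obtain ⟨u, hu, v, hv, huv⟩ := ht
        obtain ⟨w, hw, hwf⟩ := hA t
        have key : ∀ x, x ∈ insert (fun _ => false) T → x t = true → t ∈ badCols T → True :=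
          fun _ _ _ _ => trivial
        rcases Finset.mem_insert.mp hu with h | h
        · rcases Finset.mem_insert.mp hv with h' | h'
          · exfalso; rw [h, h'] at huv; exact huv rfl
          · refine ⟨v, h', w, hw, ?_⟩
            rw [h] at huv
            cases hvt : v t with
            | false => exact absurd (by rw [hvt]) huv
            | true => intro hEq; exact hwf hEq.symm
        · rcases Finset.mem_insert.mp hv with h' | h'
          · refine ⟨u, h, w, hw, ?_⟩
            rw [h'] at huv
            cases hut : u t with
            | false => exact absurd (by rw [hut]) huv
            | true => intro hEq; exact hwf hEq.symm
          · exact ⟨u, h, v, h', huv⟩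
      exact le_trans (Finset.card_le_card this) hbad
end

section
/- Let G be a simple graph on vertex set Fin L, let S be the finite set of strings consisting of the all-false string 0 together with the incidence strings χ(e) of all edges e of G, and let k be a natural number. Suppose T ⊆ S satisfies 0 ∈ T and T has at most k bad columns, and let U = bad(T) be the set of bad columns of T. Then |U| ≤ k, every edge e of G with χ(e) ∈ T has both endpoints in U, and consequently |E[U]| ≥ |T| − 1. -/
/-- Reverse direction of the reduction: if `T ⊆ S` contains the all-false string and
has at most `k` bad columns, then with `U = bad(T)` we have `|U| ≤ k`, every edge `e`
with `χ(e) ∈ T` has both endpoints in `U`, and `|E[U]| ≥ |T| - 1`. -/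
theorem stmt13 (L : ℕ) (G : SimpleGraph (Fin L)) [DecidableRel G.Adj] (k : ℕ)
    (S : Finset (Fin L → Bool))
    (hS : S = insert (fun _ => false) (G.edgeFinset.image chi))
    (T : Finset (Fin L → Bool)) (hT : T ⊆ S) (h0 : (fun _ => false) ∈ T)
    (hbad : (badCols T).card ≤ k) :
    (badCols T).card ≤ k ∧
    (∀ e ∈ G.edgeFinset, chi e ∈ T → ∀ v ∈ e, v ∈ badCols T) ∧
    T.card - 1 ≤ (G.edgeFinset.filter (fun e => ∀ v ∈ e, v ∈ badCols T)).card := by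
  have hend : ∀ e ∈ G.edgeFinset, chi e ∈ T → ∀ v ∈ e, v ∈ badCols T := by
    intro e _ he v hv
    simp only [badCols, Finset.mem_filter, Finset.mem_univ, true_and]
    exact ⟨chi e, he, (fun _ => false), h0, by simp [chi, hv]⟩
  refine ⟨hbad, hend, ?_⟩
  have hsub : T.erase (fun _ => false) ⊆
      (G.edgeFinset.filter (fun e => ∀ v ∈ e, v ∈ badCols T)).image chi := by
    intro u hu
    obtain ⟨hne, huT⟩ := Finset.mem_erase.mp hu
    have := hT huT
    rw [hS, Finset.mem_insert] at this
    rcases this with h | h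
    · exact absurd h hne
    · obtain ⟨e, heG, hchi⟩ := Finset.mem_image.mp h
      exact Finset.mem_image.mpr ⟨e, Finset.mem_filter.mpr ⟨heG,
        fun v hv => hend e heG (hchi ▸ huT) v hv⟩, hchi⟩
  calc T.card - 1 = (T.erase (fun _ => false)).card := (Finset.card_erase_of_mem h0).symm
    _ ≤ ((G.edgeFinset.filter (fun e => ∀ v ∈ e, v ∈ badCols T)).image chi).card :=
        Finset.card_le_card hsub
    _ ≤ _ := Finset.card_image_le
end
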